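/- arXiv:2111.03046 — 4 statements merged into one kernel-verified Lean document; each statement's English description precedes it below -/
import Mathlib

section
/- Let (P,w) be a normalized weighted set of n points in R^d (Σ w_i = 1, Σ w_i p_i = 0, Σ w_i ‖p_i‖² = 1), let ε ∈ (0,1), and let u ∈ R^n satisfy (1) ‖Σ_i u_i p_i‖ ≤ ε, (2) |1 − Σ_i u_i| ≤ ε, and (3) |1 − Σ_i u_i ‖p_i‖²| ≤ ε. Then for every x ∈ R^d, |Σ_i (w_i − u_i)‖p_i − x‖²| ≤ 2ε Σ_i w_i ‖p_i − x‖². -/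
open scoped BigOperators RealInnerProductSpace

/-!
Expanding `‖p i - x‖² = ‖p i‖² - 2⟪p i, x⟫ + ‖x‖²` turns every weighted sum `∑ v i ‖p i - x‖²`
into a quadratic polynomial in `x` whose coefficients are the three moments `∑ v i ‖p i‖²`,
`∑ v i • p i` and `∑ v i`. For the normalized weights this is `1 + ‖x‖²`; for `u` each moment is
`ε`-close to that of `w`, so the difference is at most `ε (1 + ‖x‖)² ≤ 2ε (1 + ‖x‖²)`.
-/

section WeightedSums

variable {ι E : Type*} [Fintype ι] [NormedAddCommGroup E] [InnerProductSpace ℝ E]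

theorem sum_mul_norm_sub_sq (v : ι → ℝ) (p : ι → E) (x : E) :
    ∑ i, v i * ‖p i - x‖ ^ 2
      = ∑ i, v i * ‖p i‖ ^ 2 - 2 * ⟪∑ i, v i • p i, x⟫ + (∑ i, v i) * ‖x‖ ^ 2 := by
  rw [sum_inner, Finset.sum_mul, Finset.mul_sum, ← Finset.sum_sub_distrib,
    ← Finset.sum_add_distrib]
  refine Finset.sum_congr rfl fun i _ => ?_
  rw [real_inner_smul_left, norm_sub_sq_real]
  ring

theorem sum_mul_norm_sub_sq_of_normalized {w : ι → ℝ} {p : ι → E}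
    (hw1 : ∑ i, w i = 1) (hw2 : ∑ i, w i • p i = 0) (hw3 : ∑ i, w i * ‖p i‖ ^ 2 = 1) (x : E) :
    ∑ i, w i * ‖p i - x‖ ^ 2 = 1 + ‖x‖ ^ 2 := by
  rw [sum_mul_norm_sub_sq, hw1, hw2, hw3, inner_zero_left]
  ring

theorem abs_sum_sub_mul_norm_sub_sq_le {w u : ι → ℝ} {p : ι → E} {ε : ℝ}
    (hw1 : ∑ i, w i = 1) (hw2 : ∑ i, w i • p i = 0) (hw3 : ∑ i, w i * ‖p i‖ ^ 2 = 1)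
    (hu1 : ‖∑ i, u i • p i‖ ≤ ε) (hu2 : |1 - ∑ i, u i| ≤ ε)
    (hu3 : |1 - ∑ i, u i * ‖p i‖ ^ 2| ≤ ε) (x : E) :
    |∑ i, (w i - u i) * ‖p i - x‖ ^ 2| ≤ ε * (1 + ‖x‖) ^ 2 := by
  have hdiff : ∑ i, (w i - u i) * ‖p i - x‖ ^ 2
      = (1 - ∑ i, u i * ‖p i‖ ^ 2) + 2 * ⟪∑ i, u i • p i, x⟫ + (1 - ∑ i, u i) * ‖x‖ ^ 2 := by
    simp only [sub_mul, Finset.sum_sub_distrib]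
    rw [sum_mul_norm_sub_sq_of_normalized hw1 hw2 hw3, sum_mul_norm_sub_sq]
    ring
  have hinner : |⟪∑ i, u i • p i, x⟫| ≤ ε * ‖x‖ :=
    (abs_real_inner_le_norm _ _).trans (mul_le_mul_of_nonneg_right hu1 (norm_nonneg x))
  have hquad : |(1 - ∑ i, u i) * ‖x‖ ^ 2| ≤ ε * ‖x‖ ^ 2 := by
    rw [abs_mul, abs_of_nonneg (sq_nonneg ‖x‖)]
    exact mul_le_mul_of_nonneg_right hu2 (sq_nonneg _)
  calc |∑ i, (w i - u i) * ‖p i - x‖ ^ 2|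
      ≤ |1 - ∑ i, u i * ‖p i‖ ^ 2| + 2 * |⟪∑ i, u i • p i, x⟫| + |(1 - ∑ i, u i) * ‖x‖ ^ 2| := by
        rw [hdiff]
        refine (abs_add_le _ _).trans (add_le_add_left ((abs_add_le _ _).trans ?_) _)
        rw [abs_mul, abs_two]
    _ ≤ ε + 2 * (ε * ‖x‖) + ε * ‖x‖ ^ 2 := by gcongr
    _ = ε * (1 + ‖x‖) ^ 2 := by ring

end WeightedSums

theorem stmt2_general {d n : ℕ} (p : Fin n → EuclideanSpace ℝ (Fin d)) (w : Fin n → ℝ)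
    (hw1 : ∑ i, w i = 1) (hw2 : ∑ i, w i • p i = 0) (hw3 : ∑ i, w i * ‖p i‖ ^ 2 = 1)
    (ε : ℝ) (u : Fin n → ℝ)
    (hu1 : ‖∑ i, u i • p i‖ ≤ ε)
    (hu2 : |1 - ∑ i, u i| ≤ ε)
    (hu3 : |1 - ∑ i, u i * ‖p i‖ ^ 2| ≤ ε) :
    ∀ x : EuclideanSpace ℝ (Fin d),
      |∑ i, (w i - u i) * ‖p i - x‖ ^ 2| ≤ 2 * ε * ∑ i, w i * ‖p i - x‖ ^ 2 := by
  intro x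
  have hε : 0 ≤ ε := (abs_nonneg _).trans hu2
  rw [sum_mul_norm_sub_sq_of_normalized hw1 hw2 hw3]
  calc |∑ i, (w i - u i) * ‖p i - x‖ ^ 2|
      ≤ ε * (1 + ‖x‖) ^ 2 := abs_sum_sub_mul_norm_sub_sq_le hw1 hw2 hw3 hu1 hu2 hu3 x
    _ ≤ 2 * ε * (1 + ‖x‖ ^ 2) := by nlinarith [mul_nonneg hε (sq_nonneg (1 - ‖x‖))]

theorem stmt2 {d n : ℕ} (p : Fin n → EuclideanSpace ℝ (Fin d)) (w : Fin n → ℝ)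
    (hw1 : ∑ i, w i = 1) (hw2 : ∑ i, w i • p i = 0) (hw3 : ∑ i, w i * ‖p i‖ ^ 2 = 1)
    (ε : ℝ) (hε : ε ∈ Set.Ioo (0 : ℝ) 1) (u : Fin n → ℝ)
    (hu1 : ‖∑ i, u i • p i‖ ≤ ε)
    (hu2 : |1 - ∑ i, u i| ≤ ε)
    (hu3 : |1 - ∑ i, u i * ‖p i‖ ^ 2| ≤ ε) :
    ∀ x : EuclideanSpace ℝ (Fin d),
      |∑ i, (w i - u i) * ‖p i - x‖ ^ 2| ≤ 2 * ε * ∑ i, w i * ‖p i - x‖ ^ 2 :=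
  stmt2_general p w hw1 hw2 hw3 ε u hu1 hu2 hu3
end

section
/- Let P = {p_1,...,p_n} be n points in R^d with ‖p_i‖ ≤ 1 for every i, let w ∈ [0,1]^n be a distribution vector (Σ_i w_i = 1), and let ε ∈ (0,1). Then there exists a distribution vector ũ ∈ [0,1]^n with at most 8/ε non-zero entries such that ‖Σ_i (w_i − ũ_i) p_i‖² ≤ ε. -/
/-!
Frank–Wolfe iteration towards the mean `μ = ∑ wᵢ pᵢ`. Starting from a single point, step `t`
replaces the iterate `q` by `(t q + p_j) / (t + 1)`, where `p_j` is chosen with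
`⟪q - μ, p_j - μ⟫ ≤ 0`; such a `j` exists because these inner products have `w`-average zero.
The cross term then drops out of `‖q' - μ‖²`, and with all points within `D` of `μ` the bound
`‖q - μ‖² ≤ D² / t` propagates, while every step adds at most one atom to the support.
For the unit ball `D = 2`, and `t = ⌈4 / ε⌉` gives the theorem.
-/

open Finset
open scoped InnerProductSpace

section WeightedMean

variable {ι : Type*} [Fintype ι] {w : ι → ℝ}

theorem exists_le_sum_mul_of_sum_eq_one (hw0 : ∀ i, 0 ≤ w i) (hw1 : ∑ i, w i = 1)
    (f : ι → ℝ) : ∃ j, f j ≤ ∑ i, w i * f i := by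
  have hpos : 0 < ∑ i, w i := hw1 ▸ one_pos
  obtain ⟨j, -, hj⟩ := exists_mem_eq_inf' (nonempty_of_sum_ne_zero hpos.ne') f
  refine ⟨j, hj ▸ (inf_le_centerMass (fun i _ => hw0 i) hpos).trans_eq ?_⟩
  simp [centerMass_eq_of_sum_1 _ _ hw1]

variable {E : Type*} [NormedAddCommGroup E] [InnerProductSpace ℝ E]

theorem exists_inner_sub_sum_smul_nonpos (hw0 : ∀ i, 0 ≤ w i) (hw1 : ∑ i, w i = 1)
    (p : ι → E) (v : E) : ∃ j, ⟪v, p j - ∑ i, w i • p i⟫_ℝ ≤ 0 := by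
  obtain ⟨j, hj⟩ := exists_le_sum_mul_of_sum_eq_one hw0 hw1 fun i => ⟪v, p i - ∑ k, w k • p k⟫_ℝ
  refine ⟨j, hj.trans_eq ?_⟩
  simp only [← real_inner_smul_right, ← inner_sum, smul_sub, sum_sub_distrib, ← sum_smul, hw1,
    one_smul, sub_self, inner_zero_right]

end WeightedMean

theorem norm_smul_add_smul_sq_le_of_inner_nonpos {E : Type*} [NormedAddCommGroup E]
    [InnerProductSpace ℝ E] {x y : E} (hxy : ⟪x, y⟫_ℝ ≤ 0) {a b : ℝ} (ha : 0 ≤ a) (hb : 0 ≤ b) :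
    ‖a • x + b • y‖ ^ 2 ≤ a ^ 2 * ‖x‖ ^ 2 + b ^ 2 * ‖y‖ ^ 2 := by
  rw [norm_add_sq_real, real_inner_smul_left, real_inner_smul_right, norm_smul, norm_smul,
    Real.norm_of_nonneg ha, Real.norm_of_nonneg hb]
  nlinarith [mul_nonneg ha hb]

section Step

variable {ι : Type*} [Fintype ι] [DecidableEq ι] (u : ι → ℝ) (a b : ℝ) (j : ι)

theorem sum_smul_add_single : ∑ i, (a • u + Pi.single j b : ι → ℝ) i = a * ∑ i, u i + b := by
  simp [sum_add_distrib, mul_sum]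

theorem card_filter_smul_add_single_ne_zero_le :
    #{i | (a • u + Pi.single j b : ι → ℝ) i ≠ 0} ≤ #{i | u i ≠ 0} + 1 := by
  refine (card_le_card fun i => ?_).trans (card_insert_le j _)
  by_cases hij : i = j
  · simp [hij]
  · simp_all

theorem sum_smul_add_single_smul {E : Type*} [AddCommGroup E] [Module ℝ E] (p : ι → E) :
    ∑ i, (a • u + Pi.single j b : ι → ℝ) i • p i = a • ∑ i, u i • p i + b • p j := by
  simp [add_smul, sum_add_distrib, smul_sum, mul_smul, Pi.single_apply]

end Step

section FrankWolfe

variable {ι E : Type*} [Fintype ι] [DecidableEq ι] [NormedAddCommGroup E] [InnerProductSpace ℝ E]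

theorem exists_sparse_weights_norm_sub_sq_le {w : ι → ℝ} (hw0 : ∀ i, 0 ≤ w i)
    (hw1 : ∑ i, w i = 1) {p : ι → E} {D : ℝ} (hD : ∀ i, ‖p i - ∑ k, w k • p k‖ ≤ D)
    {t : ℕ} (ht : 1 ≤ t) :
    ∃ u : ι → ℝ, (∀ i, 0 ≤ u i) ∧ ∑ i, u i = 1 ∧ #{i | u i ≠ 0} ≤ t ∧
      ‖∑ i, u i • p i - ∑ i, w i • p i‖ ^ 2 ≤ D ^ 2 / t := by
  set μ := ∑ i, w i • p i
  induction t, ht using Nat.le_induction with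
  | base =>
    obtain ⟨j⟩ : Nonempty ι := nonempty_of_sum_ne_zero (hw1 ▸ one_ne_zero) |>.to_type
    refine ⟨Pi.single j 1, fun i => ?_, by simp, ?_, ?_⟩
    · by_cases hij : i = j <;> simp [hij]
    · refine (card_le_card fun i => ?_).trans (card_singleton j).le
      by_cases hij : i = j <;> simp_all
    · simpa using pow_le_pow_left₀ (norm_nonneg _) (hD j) 2
  | succ t ht ih =>
    obtain ⟨u, hu0, hu1, hcard, hdist⟩ := ih
    obtain ⟨j, hj⟩ := exists_inner_sub_sum_smul_nonpos hw0 hw1 p (∑ i, u i • p i - μ)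
    have htpos : (0 : ℝ) < t := by exact_mod_cast ht
    set a : ℝ := t / (t + 1)
    set b : ℝ := 1 / (t + 1)
    have ha : 0 ≤ a := by positivity
    have hb : 0 ≤ b := by positivity
    have hab : a + b = 1 := by simp only [a, b]; field_simp
    refine ⟨a • u + Pi.single j b, fun i => ?_, ?_, ?_, ?_⟩
    · have hsingle : (0 : ι → ℝ) ≤ Pi.single j b := Pi.single_nonneg.2 hb
      exact add_nonneg (mul_nonneg ha (hu0 i)) (hsingle i)
    · rw [sum_smul_add_single, hu1, mul_one, hab]
    · exact (card_filter_smul_add_single_ne_zero_le u a b j).trans (by omega)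
    · have hstep : ∑ i, (a • u + Pi.single j b : ι → ℝ) i • p i - μ =
          a • (∑ i, u i • p i - μ) + b • (p j - μ) := by
        rw [sum_smul_add_single_smul]
        linear_combination (norm := module) hab • μ
      have hrecur : a ^ 2 * (D ^ 2 / t) + b ^ 2 * D ^ 2 = D ^ 2 / (t + 1) := by
        simp only [a, b]; field_simp
      rw [hstep, Nat.cast_succ, ← hrecur]
      calc _ ≤ a ^ 2 * ‖∑ i, u i • p i - μ‖ ^ 2 + b ^ 2 * ‖p j - μ‖ ^ 2 :=
            norm_smul_add_smul_sq_le_of_inner_nonpos hj ha hb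
        _ ≤ a ^ 2 * (D ^ 2 / t) + b ^ 2 * D ^ 2 := by gcongr; exact hD j

end FrankWolfe

theorem stmt7 {d n : ℕ} (p : Fin n → EuclideanSpace ℝ (Fin d))
    (hp : ∀ i, ‖p i‖ ≤ 1) (w : Fin n → ℝ)
    (hw0 : ∀ i, 0 ≤ w i) (hw1 : ∑ i, w i = 1)
    (ε : ℝ) (hε : ε ∈ Set.Ioo (0 : ℝ) 1) :
    ∃ u : Fin n → ℝ, (∀ i, 0 ≤ u i) ∧ (∀ i, u i ≤ 1) ∧ (∑ i, u i = 1) ∧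
      ((Finset.univ.filter fun i => u i ≠ 0).card : ℝ) ≤ 8 / ε ∧
      ‖∑ i, (w i - u i) • p i‖ ^ 2 ≤ ε := by
  obtain ⟨hε0, hε1⟩ := hε
  have hμ : ‖∑ i, w i • p i‖ ≤ 1 := by
    simpa using (convex_closedBall (0 : EuclideanSpace ℝ (Fin d)) 1).sum_mem
      (fun i _ => hw0 i) hw1 (fun i _ => by simpa using hp i)
  have hD (i : Fin n) : ‖p i - ∑ k, w k • p k‖ ≤ 2 := by
    linarith [norm_sub_le (p i) (∑ k, w k • p k), hp i]
  set t := ⌈4 / ε⌉₊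
  have ht : 4 / ε ≤ t := Nat.le_ceil _
  have htε : (t : ℝ) ≤ 8 / ε := by
    have := Nat.ceil_lt_add_one (show 0 ≤ 4 / ε by positivity)
    have : 1 ≤ 4 / ε := by rw [le_div_iff₀ hε0]; linarith
    linarith [show 8 / ε = 4 / ε + 4 / ε by ring]
  obtain ⟨u, hu0, hu1, hcard, hdist⟩ :=
    exists_sparse_weights_norm_sub_sq_le hw0 hw1 hD (t := t) (Nat.one_le_ceil_iff.2 (by positivity))
  refine ⟨u, hu0, fun i => hu1 ▸ single_le_sum (fun k _ => hu0 k) (mem_univ i), hu1,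
    (Nat.cast_le.2 hcard).trans htε, ?_⟩
  have htpos : (0 : ℝ) < t := (show (0 : ℝ) < 4 / ε by positivity).trans_le ht
  calc ‖∑ i, (w i - u i) • p i‖ ^ 2 = ‖∑ i, u i • p i - ∑ i, w i • p i‖ ^ 2 := by
        rw [← norm_neg]; simp [sub_smul, sum_sub_distrib]
    _ ≤ (2 : ℝ) ^ 2 / t := hdist
    _ ≤ ε := by rw [div_le_iff₀ htpos]; rw [div_le_iff₀ hε0] at ht; linarith
end

section
/- Let (P,w) be a normalized weighted set in R^d. Define p'_i = (p_i,1)/‖(p_i,1)‖² ∈ R^{d+1} and w'_i = w_i ‖(p_i,1)‖²/2. Then (i) ‖p'_i‖ ≤ 1 for every i, (ii) Σ_i w'_i = 1, and (iii) for any u' ∈ R^n, setting u_i = 2u'_i/‖(p_i,1)‖², one has Σ_i (w'_i − u'_i) p'_i = (1/2)·(Σ_i (w_i − u_i) p_i , Σ_i (w_i − u_i)). -/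
open scoped BigOperators

/-!
Writing `L i = ‖(p i, 1)‖² = ‖p i‖² + 1 ≥ 1`, the point `p' i = L i⁻¹ • (p i, 1)` has norm
`L i^(-1/2) ≤ 1`, and `Σ w' i = (Σ w i ‖p i‖² + Σ w i) / 2 = 1`. For (iii), the factor `L i`
in `w' i` and the factor `L i⁻¹` in `u' i = u i L i / 2` both cancel against the `L i⁻¹` of
`p' i`, so that `(w' i - u' i) • p' i = 2⁻¹ (w i - u i) • (p i, 1)`, and the sum splits
coordinatewise.
-/

section Lift

variable {E : Type*} [SeminormedAddCommGroup E]

lemma norm_sq_toLp_prod_one (x : E) : ‖WithLp.toLp 2 (x, (1 : ℝ))‖ ^ 2 = ‖x‖ ^ 2 + 1 := by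
  rw [WithLp.prod_norm_sq_eq_of_L2]
  simp

lemma one_le_norm_sq_toLp_prod_one (x : E) : 1 ≤ ‖WithLp.toLp 2 (x, (1 : ℝ))‖ ^ 2 := by
  rw [norm_sq_toLp_prod_one]
  linarith [sq_nonneg ‖x‖]

end Lift

lemma sum_smul_toLp_prod_one {E ι : Type*} [AddCommGroup E] [Module ℝ E]
    (s : Finset ι) (c : ι → ℝ) (x : ι → E) :
    ∑ i ∈ s, c i • WithLp.toLp 2 (x i, (1 : ℝ)) =
      WithLp.toLp 2 (∑ i ∈ s, c i • x i, ∑ i ∈ s, c i) := by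
  simp only [← WithLp.toLp_smul, Prod.smul_mk, smul_eq_mul, mul_one, ← WithLp.toLp_sum]
  congr 1
  ext <;> simp only [Prod.fst_sum, Prod.snd_sum]

lemma norm_inv_norm_sq_smul {F : Type*} [NormedAddCommGroup F] [NormedSpace ℝ F] (v : F) :
    ‖(‖v‖ ^ 2)⁻¹ • v‖ = ‖v‖⁻¹ := by
  rcases eq_or_ne ‖v‖ 0 with hv | hv
  · simp [hv]
  · rw [norm_smul, norm_inv, norm_pow, norm_norm]
    field_simp

lemma sub_smul_inv_smul_eq {M : Type*} [AddCommGroup M] [Module ℝ M] {L : ℝ} (hL : L ≠ 0)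
    (w u' : ℝ) (v : M) :
    (w * L / 2 - u') • L⁻¹ • v = ((2 : ℝ)⁻¹ * (w - 2 * u' / L)) • v := by
  rw [smul_smul]
  congr 1
  field_simp

theorem stmt8_general {d n : ℕ} (p : Fin n → EuclideanSpace ℝ (Fin d)) (w u u' : Fin n → ℝ)
    (hw1 : ∑ i, w i = 1) (hw3 : ∑ i, w i * ‖p i‖ ^ 2 = 1)
    (lift : Fin n → WithLp 2 (EuclideanSpace ℝ (Fin d) × ℝ))
    (hlift : ∀ i, lift i = (WithLp.equiv 2 (EuclideanSpace ℝ (Fin d) × ℝ)).symm (p i, 1))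
    (p' : Fin n → WithLp 2 (EuclideanSpace ℝ (Fin d) × ℝ))
    (hp' : ∀ i, p' i = (‖lift i‖ ^ 2)⁻¹ • lift i)
    (w' : Fin n → ℝ) (hw' : ∀ i, w' i = w i * ‖lift i‖ ^ 2 / 2)
    (hu : ∀ i, u i = 2 * u' i / ‖lift i‖ ^ 2) :
    (∀ i, ‖p' i‖ ≤ 1) ∧ (∑ i, w' i = 1) ∧
      (∑ i, (w' i - u' i) • p' i
        = (2 : ℝ)⁻¹ • (WithLp.equiv 2 (EuclideanSpace ℝ (Fin d) × ℝ)).symm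
            (∑ i, (w i - u i) • p i, ∑ i, (w i - u i))) := by
  simp only [WithLp.equiv_symm_apply] at hlift ⊢
  have hL : ∀ i, 1 ≤ ‖lift i‖ ^ 2 := fun i => hlift i ▸ one_le_norm_sq_toLp_prod_one (p i)
  refine ⟨fun i => ?_, ?_, ?_⟩
  · rw [hp' i, norm_inv_norm_sq_smul]
    exact inv_le_one_of_one_le₀ ((one_le_sq_iff₀ (norm_nonneg _)).mp (hL i))
  · have hw'_eq : ∀ i, w' i = (w i * ‖p i‖ ^ 2 + w i) / 2 := fun i => by
      rw [hw' i, hlift i, norm_sq_toLp_prod_one]; ring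
    simp only [hw'_eq, ← Finset.sum_div, Finset.sum_add_distrib, hw1, hw3]
    norm_num
  · have hterm : ∀ i, (w' i - u' i) • p' i = ((2 : ℝ)⁻¹ * (w i - u i)) • lift i := by
      intro i
      rw [hp' i, hw' i, hu i]
      exact sub_smul_inv_smul_eq (by linarith [hL i]) _ _ _
    simp only [hterm, mul_smul, ← Finset.smul_sum, hlift, sum_smul_toLp_prod_one]

theorem stmt8 {d n : ℕ} (p : Fin n → EuclideanSpace ℝ (Fin d)) (w u u' : Fin n → ℝ)
    (hw1 : ∑ i, w i = 1) (hw2 : ∑ i, w i • p i = 0) (hw3 : ∑ i, w i * ‖p i‖ ^ 2 = 1)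
    (lift : Fin n → WithLp 2 (EuclideanSpace ℝ (Fin d) × ℝ))
    (hlift : ∀ i, lift i = (WithLp.equiv 2 (EuclideanSpace ℝ (Fin d) × ℝ)).symm (p i, 1))
    (p' : Fin n → WithLp 2 (EuclideanSpace ℝ (Fin d) × ℝ))
    (hp' : ∀ i, p' i = (‖lift i‖ ^ 2)⁻¹ • lift i)
    (w' : Fin n → ℝ) (hw' : ∀ i, w' i = w i * ‖lift i‖ ^ 2 / 2)
    (hu : ∀ i, u i = 2 * u' i / ‖lift i‖ ^ 2) :
    (∀ i, ‖p' i‖ ≤ 1) ∧ (∑ i, w' i = 1) ∧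
      (∑ i, (w' i - u' i) • p' i
        = (2 : ℝ)⁻¹ • (WithLp.equiv 2 (EuclideanSpace ℝ (Fin d) × ℝ)).symm
            (∑ i, (w i - u i) • p i, ∑ i, (w i - u i))) :=
  stmt8_general p w u u' hw1 hw3 lift hlift p' hp' w' hw' hu
end

section
/- Let (Q,m) be a weighted set of n ≥ 2 points in R^d with m ∈ (0,∞)^n, and let (P,w) be its normalization: w = m/‖m‖_1, μ = Σ_i w_i q_i, σ² = Σ_i w_i‖q_i − μ‖² > 0, p_i = (q_i − μ)/σ. Suppose u ∈ R^n satisfies, for every y ∈ R^d, |Σ_i (w_i − u_i)‖p_i − y‖²| ≤ ε Σ_i w_i‖p_i − y‖². Let u' = ‖m‖_1·u. Then for every x ∈ R^d, |Σ_i (m_i − u'_i)‖q_i − x‖²| ≤ ε Σ_i m_i‖q_i − x‖². -/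
open scoped BigOperators

theorem stmt16 {d n : ℕ} (hn : 2 ≤ n) (q : Fin n → EuclideanSpace ℝ (Fin d))
    (m : Fin n → ℝ) (hm : ∀ i, 0 < m i)
    (w : Fin n → ℝ) (hw : ∀ i, w i = m i / ∑ j, m j)
    (μ : EuclideanSpace ℝ (Fin d)) (hμ : μ = ∑ i, w i • q i)
    (σ : ℝ) (hσpos : 0 < σ) (hσ : σ ^ 2 = ∑ i, w i * ‖q i - μ‖ ^ 2)
    (p : Fin n → EuclideanSpace ℝ (Fin d)) (hp : ∀ i, p i = σ⁻¹ • (q i - μ))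
    (ε : ℝ) (u : Fin n → ℝ)
    (hcore : ∀ y : EuclideanSpace ℝ (Fin d),
      |∑ i, (w i - u i) * ‖p i - y‖ ^ 2| ≤ ε * ∑ i, w i * ‖p i - y‖ ^ 2)
    (u' : Fin n → ℝ) (hu' : ∀ i, u' i = (∑ j, m j) * u i) :
    ∀ x : EuclideanSpace ℝ (Fin d),
      |∑ i, (m i - u' i) * ‖q i - x‖ ^ 2| ≤ ε * ∑ i, m i * ‖q i - x‖ ^ 2 := by
  intro x
  set M : ℝ := ∑ j, m j with hM
  have hMpos : 0 < M := Finset.sum_pos (fun i _ => hm i) ⟨⟨0, by omega⟩, Finset.mem_univ _⟩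
  set y : EuclideanSpace ℝ (Fin d) := σ⁻¹ • (x - μ) with hy
  have hnorm : ∀ i, ‖q i - x‖ ^ 2 = σ ^ 2 * ‖p i - y‖ ^ 2 := by
    intro i
    have : p i - y = σ⁻¹ • (q i - x) := by
      rw [hp, hy, ← smul_sub]; congr 1; abel
    rw [this, norm_smul, mul_pow, Real.norm_eq_abs, abs_inv, abs_of_pos hσpos,
      ← mul_assoc, inv_pow, mul_inv_cancel₀ (by positivity), one_mul]
  have hmw : ∀ i, m i = M * w i := fun i => by
    rw [hw i]; field_simp
  have h1 : ∑ i, (m i - u' i) * ‖q i - x‖ ^ 2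
      = (M * σ ^ 2) * ∑ i, (w i - u i) * ‖p i - y‖ ^ 2 := by
    rw [Finset.mul_sum]; apply Finset.sum_congr rfl
    intro i _; rw [hnorm i, hmw i, hu' i]; ring
  have h2 : ∑ i, m i * ‖q i - x‖ ^ 2
      = (M * σ ^ 2) * ∑ i, w i * ‖p i - y‖ ^ 2 := by
    rw [Finset.mul_sum]; apply Finset.sum_congr rfl
    intro i _; rw [hnorm i, hmw i]; ring
  rw [h1, h2, abs_mul, abs_of_pos (by positivity), mul_left_comm]
  exact mul_le_mul_of_nonneg_left (hcore y) (by positivity)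
end
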